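/- For a nonzero complex number z and |q|<1 (or as formal Laurent series), ∑_{n∈ℤ} (-1)^n q^{n(n-1)/2} z^n = (z;q)_∞ (q/z;q)_∞ (q;q)_∞. -/

import Mathlib

open scoped BigOperators

/-- Finite q-Pochhammer symbol `(a;q)_n`. -/
noncomputable def qPoch (a q : ℂ) (n : ℕ) : ℂ := ∏ k ∈ Finset.range n, (1 - a * q ^ k)

/-- Infinite q-Pochhammer symbol `(a;q)_∞`. -/
noncomputable def qPochInf (a q : ℂ) : ℂ := ∏' k : ℕ, (1 - a * q ^ k)

/-- Gaussian (q-)binomial coefficient `[N choose K]_q`, zero outside `0 ≤ K ≤ N`. -/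
noncomputable def qBinom (q : ℂ) (N K : ℤ) : ℂ :=
  if 0 ≤ K ∧ K ≤ N then qPoch q q N.toNat / (qPoch q q K.toNat * qPoch q q (N - K).toNat)
  else 0

/-!
Cauchy's q-binomial theorem `∏_{j<M} (1 + x q^j) = ∑_k [M choose k]_q q^{k(k-1)/2} x^k`, taken at
`M = 2N` and `x = -z q^{-N}`, gives the finite identity
`(z;q)_N (q/z;q)_N = ∑_n [2N choose N+n]_q (-1)^n q^{n(n-1)/2} z^n`.
As `N → ∞` the Gaussian binomials stay uniformly bounded and tend to `1/(q;q)_∞`, and the series is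
dominated by a Jacobi theta series, so Tannery's theorem passes to the limit.
The case `q = 0` is checked directly.
-/

open Filter Topology

theorem Int.add_mul_add_sub_one_ediv_two (a b : ℤ) :
    (a + b) * (a + b - 1) / 2 = a * (a - 1) / 2 + b * (b - 1) / 2 + a * b := by
  obtain ⟨u, hu⟩ := (Int.even_mul_pred_self a).two_dvd
  obtain ⟨v, hv⟩ := (Int.even_mul_pred_self b).two_dvd
  have hab : (a + b) * (a + b - 1) = 2 * (u + v + a * b) := by linear_combination hu + hv
  rw [hab, hu, hv, Int.mul_ediv_cancel_left _ two_ne_zero, Int.mul_ediv_cancel_left _ two_ne_zero,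
    Int.mul_ediv_cancel_left _ two_ne_zero]

theorem Int.cast_mul_sub_one_ediv_two {K : Type*} [Field K] [CharZero K] (n : ℤ) :
    ((n * (n - 1) / 2 : ℤ) : K) = n * (n - 1) / 2 := by
  rw [Int.cast_div (Int.even_mul_pred_self n).two_dvd (by norm_num)]
  push_cast
  ring

variable {q z : ℂ}

theorem qPoch_succ (a : ℂ) (n : ℕ) : qPoch a q (n + 1) = qPoch a q n * (1 - a * q ^ n) :=
  Finset.prod_range_succ _ _

theorem qPoch_zero (a : ℂ) : qPoch a q 0 = 1 :=
  Finset.prod_range_zero _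

theorem summable_norm_mul_pow (hq : ‖q‖ < 1) (a : ℂ) : Summable fun k : ℕ => ‖a * q ^ k‖ := by
  simpa only [norm_mul, norm_pow] using
    (summable_geometric_of_lt_one (norm_nonneg q) hq).mul_left ‖a‖

theorem hasProd_qPochInf (hq : ‖q‖ < 1) (a : ℂ) :
    HasProd (fun k : ℕ => 1 - a * q ^ k) (qPochInf a q) := by
  have := multipliable_one_add_of_summable (f := fun k : ℕ => -(a * q ^ k))
    (by simpa only [norm_neg] using summable_norm_mul_pow hq a)
  unfold qPochInf
  simpa only [← sub_eq_add_neg] using this.hasProd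

theorem tendsto_qPoch (hq : ‖q‖ < 1) (a : ℂ) :
    Tendsto (qPoch a q) atTop (𝓝 (qPochInf a q)) :=
  (hasProd_qPochInf hq a).tendsto_prod_nat

theorem one_sub_self_mul_pow_ne_zero (hq : ‖q‖ < 1) (k : ℕ) : 1 - q * q ^ k ≠ 0 := by
  rw [← pow_succ', sub_ne_zero]
  refine fun h => (pow_lt_one₀ (norm_nonneg q) hq k.succ_ne_zero).ne ?_
  rw [← norm_pow, ← h, norm_one]

theorem qPoch_self_ne_zero (hq : ‖q‖ < 1) (n : ℕ) : qPoch q q n ≠ 0 :=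
  Finset.prod_ne_zero_iff.2 fun k _ => one_sub_self_mul_pow_ne_zero hq k

theorem qPochInf_self_ne_zero (hq : ‖q‖ < 1) : qPochInf q q ≠ 0 := by
  have := tprod_one_add_ne_zero_of_summable (f := fun k : ℕ => -(q * q ^ k))
    (fun k => by simpa only [← sub_eq_add_neg] using one_sub_self_mul_pow_ne_zero hq k)
    (by simpa only [norm_neg] using summable_norm_mul_pow hq q)
  unfold qPochInf
  simpa only [← sub_eq_add_neg] using this

theorem qBinom_natCast {n k : ℕ} (h : k ≤ n) :
    qBinom q n k = qPoch q q n / (qPoch q q k * qPoch q q (n - k)) := by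
  rw [qBinom, if_pos ⟨k.cast_nonneg, Nat.cast_le.2 h⟩, ← Nat.cast_sub h]
  simp only [Int.toNat_natCast]

theorem qBinom_natCast_zero (hq : ‖q‖ < 1) (n : ℕ) : qBinom q n 0 = 1 := by
  rw [← Nat.cast_zero, qBinom_natCast n.zero_le, Nat.sub_zero, qPoch_zero,
    one_mul, div_self (qPoch_self_ne_zero hq n)]

theorem qBinom_natCast_self (hq : ‖q‖ < 1) (n : ℕ) : qBinom q n n = 1 := by
  rw [qBinom_natCast le_rfl, Nat.sub_self, qPoch_zero, mul_one,
    div_self (qPoch_self_ne_zero hq n)]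

theorem qBinom_eq_zero {N K : ℤ} (h : K < 0 ∨ N < K) : qBinom q N K = 0 :=
  if_neg (by omega)

theorem qBinom_succ (hq : ‖q‖ < 1) (M : ℕ) (k : ℤ) :
    qBinom q (M + 1) k = qBinom q M k + q ^ ((M : ℤ) + 1 - k) * qBinom q M (k - 1) := by
  rcases lt_or_ge k 0 with hk | hk
  · rw [qBinom_eq_zero (.inl hk), qBinom_eq_zero (.inl hk), qBinom_eq_zero (.inl (by omega))]
    ring
  lift k to ℕ using hk
  rcases k with _ | i
  · have h : qBinom q M (-1) = 0 := qBinom_eq_zero (.inl (by norm_num))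
    simp only [Nat.cast_zero, zero_sub, h, mul_zero, add_zero]
    exact_mod_cast (qBinom_natCast_zero hq (M + 1)).trans (qBinom_natCast_zero hq M).symm
  rcases lt_trichotomy i M with hi | rfl | hi
  · obtain ⟨a, rfl⟩ := Nat.exists_eq_add_of_le (Nat.succ_le_of_lt hi)
    rw [show ((i + 1 + a : ℕ) : ℤ) + 1 = ((i + 1 + a + 1 : ℕ) : ℤ) by push_cast; ring,
      show ((i + 1 + a + 1 : ℕ) : ℤ) - ((i + 1 : ℕ) : ℤ) = ((a + 1 : ℕ) : ℤ) by push_cast; ring,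
      show ((i + 1 : ℕ) : ℤ) - 1 = (i : ℤ) by push_cast; ring,
      zpow_natCast, qBinom_natCast (by omega), qBinom_natCast (by omega),
      qBinom_natCast (by omega), show i + 1 + a + 1 - (i + 1) = a + 1 by omega,
      show i + 1 + a - (i + 1) = a by omega, show i + 1 + a - i = a + 1 by omega]
    rw [qPoch_succ q (i + 1 + a), qPoch_succ q i, qPoch_succ q a]
    field_simp [qPoch_self_ne_zero hq, one_sub_self_mul_pow_ne_zero hq]
    ring
  · rw [qBinom_eq_zero (N := i) (.inr (by omega)), ← Nat.cast_succ, sub_self, zpow_zero,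
      qBinom_natCast_self hq, Nat.cast_succ, add_sub_cancel_right, qBinom_natCast_self hq]
    ring
  · rw [qBinom_eq_zero (.inr (by omega)), qBinom_eq_zero (.inr (by omega)),
      qBinom_eq_zero (.inr (by omega))]
    ring

theorem hasSum_qBinom_mul_pow (hq : ‖q‖ < 1) (hq0 : q ≠ 0) {x : ℂ} (hx : x ≠ 0) (M : ℕ) :
    HasSum (fun k : ℤ => qBinom q M k * q ^ (k * (k - 1) / 2) * x ^ k)
      (∏ j ∈ Finset.range M, (1 + x * q ^ j)) := by
  induction M with
  | zero =>
    convert hasSum_single (0 : ℤ) fun k hk => ?_ using 1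
    · simpa using (qBinom_natCast_zero hq 0).symm
    · rw [Nat.cast_zero, qBinom_eq_zero (by omega), zero_mul, zero_mul]
  | succ M ih =>
    have ih_shift := (Equiv.subRight (1 : ℤ)).hasSum_iff.2 ih
    rw [Finset.prod_range_succ]
    convert ih.add (ih_shift.mul_left (x * q ^ M)) using 1
    · funext k
      have ht : k * (k - 1) / 2 = (k - 1) * (k - 1 - 1) / 2 + (k - 1) := by
        simpa using Int.add_mul_add_sub_one_ediv_two (k - 1) 1
      have hexp : q ^ ((M : ℤ) + 1 - k) * q ^ (k * (k - 1) / 2)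
          = q ^ M * q ^ ((k - 1) * (k - 1 - 1) / 2) := by
        rw [← zpow_natCast, ← zpow_add₀ hq0, ← zpow_add₀ hq0, ht]
        ring_nf
      have hx' : x ^ k = x * x ^ (k - 1) := by
        rw [← zpow_one_add₀ hx, add_sub_cancel]
      simp only [Function.comp_apply, Equiv.subRight_apply, Nat.cast_succ, qBinom_succ hq]
      linear_combination qBinom q M (k - 1) * x ^ k * hexp
        + qBinom q M (k - 1) * q ^ M * q ^ ((k - 1) * (k - 1 - 1) / 2) * hx'
    · ring

theorem prod_range_neg_mul_zpow (hq0 : q ≠ 0) (N : ℕ) :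
    ∏ j ∈ Finset.range N, (-z * q ^ (-((j : ℤ) + 1)))
      = (-z) ^ N * q ^ ((N : ℤ) * (N - 1) / 2 - N * N) := by
  induction N with
  | zero => simp
  | succ N ih =>
    have ht : ((N : ℤ) + 1) * (N + 1 - 1) / 2 = N * (N - 1) / 2 + N := by
      simpa using Int.add_mul_add_sub_one_ediv_two N 1
    rw [Finset.prod_range_succ, ih, Nat.cast_succ, ht, pow_succ,
      show (N : ℤ) * (N - 1) / 2 + N - (N + 1) * (N + 1)
        = (N : ℤ) * (N - 1) / 2 - N * N + -(N + 1) by ring, zpow_add₀ hq0]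
    ring

theorem prod_range_two_mul_one_add (hq0 : q ≠ 0) (hz : z ≠ 0) (N : ℕ) :
    ∏ j ∈ Finset.range (2 * N), (1 + -z * q ^ (-(N : ℤ)) * q ^ j)
      = (-z) ^ N * q ^ ((N : ℤ) * (N - 1) / 2 - N * N) * (qPoch z q N * qPoch (q / z) q N) := by
  have lower : ∏ j ∈ Finset.range N, (1 + -z * q ^ (-(N : ℤ)) * q ^ j)
      = (∏ j ∈ Finset.range N, (-z * q ^ (-((j : ℤ) + 1)))) * qPoch (q / z) q N := by
    rw [qPoch, ← Finset.prod_mul_distrib, ← Finset.prod_range_reflect]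
    refine Finset.prod_congr rfl fun j hj => ?_
    have hjN : j < N := Finset.mem_range.1 hj
    have hpow : q ^ (-(N : ℤ)) * q ^ (N - 1 - j) = q ^ (-((j : ℤ) + 1)) := by
      rw [← zpow_natCast, ← zpow_add₀ hq0, Nat.cast_sub (by omega), Nat.cast_sub (by omega)]
      ring_nf
    rw [mul_assoc, hpow, show -((j : ℤ) + 1) = -((j + 1 : ℕ) : ℤ) by push_cast; ring, zpow_neg,
      zpow_natCast, pow_succ]
    field_simp
    ring
  have upper : ∏ j ∈ Finset.range N, (1 + -z * q ^ (-(N : ℤ)) * q ^ (N + j)) = qPoch z q N := by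
    refine Finset.prod_congr rfl fun j _ => ?_
    rw [pow_add, zpow_neg, zpow_natCast]
    field_simp
    ring
  rw [two_mul, Finset.prod_range_add, lower, upper, prod_range_neg_mul_zpow hq0]
  ring

theorem hasSum_qBinom_mul_jacobi_term (hq : ‖q‖ < 1) (hq0 : q ≠ 0) (hz : z ≠ 0) (N : ℕ) :
    HasSum (fun n : ℤ => qBinom q (2 * N) (n + N) * ((-1) ^ n * q ^ (n * (n - 1) / 2) * z ^ n))
      (qPoch z q N * qPoch (q / z) q N) := by
  set c := (-z) ^ N * q ^ ((N : ℤ) * (N - 1) / 2 - N * N)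
  have hc : c ≠ 0 := mul_ne_zero (pow_ne_zero _ (neg_ne_zero.2 hz)) (zpow_ne_zero _ hq0)
  have hx : -z * q ^ (-(N : ℤ)) ≠ 0 := mul_ne_zero (neg_ne_zero.2 hz) (zpow_ne_zero _ hq0)
  have h := (Equiv.addRight (N : ℤ)).hasSum_iff.2 (hasSum_qBinom_mul_pow hq hq0 hx (2 * N))
  rw [prod_range_two_mul_one_add hq0 hz] at h
  rw [← hasSum_mul_left_iff hc]
  refine h.congr_fun fun n => ?_
  have ht := Int.add_mul_add_sub_one_ediv_two n N
  simp only [Function.comp_apply, Equiv.coe_addRight, Nat.cast_mul, Nat.cast_ofNat]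
  rw [mul_zpow, ← zpow_mul, zpow_add₀ (neg_ne_zero.2 hz), neg_eq_neg_one_mul z, mul_zpow, ht]
  have hpow : q ^ (n * (n - 1) / 2 + N * (N - 1) / 2 + n * N) * q ^ (-(N : ℤ) * (n + N))
      = q ^ (n * (n - 1) / 2) * q ^ ((N : ℤ) * (N - 1) / 2 - N * N) := by
    rw [← zpow_add₀ hq0, ← zpow_add₀ hq0]
    ring_nf
  rw [zpow_natCast, ← neg_eq_neg_one_mul]
  linear_combination (-(qBinom q (2 * N) (n + N) * (-1) ^ n * z ^ n * (-z) ^ N)) * hpow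

theorem exists_norm_qBinom_le (hq : ‖q‖ < 1) : ∃ C, ∀ N K : ℤ, ‖qBinom q N K‖ ≤ C := by
  have hlim := tendsto_qPoch hq q
  obtain ⟨A, hA⟩ := isBounded_iff_forall_norm_le.1 (Metric.isBounded_range_of_tendsto _ hlim)
  obtain ⟨B, hB⟩ := isBounded_iff_forall_norm_le.1
    (Metric.isBounded_range_of_tendsto _ (hlim.inv₀ (qPochInf_self_ne_zero hq)))
  have hA' (m : ℕ) : ‖qPoch q q m‖ ≤ A := hA _ ⟨m, rfl⟩
  have hB' (m : ℕ) : ‖(qPoch q q m)⁻¹‖ ≤ B := hB _ ⟨m, rfl⟩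
  have hA0 : 0 ≤ A := (norm_nonneg _).trans (hA' 0)
  have hB0 : 0 ≤ B := (norm_nonneg _).trans (hB' 0)
  refine ⟨A * B * B, fun N K => ?_⟩
  unfold qBinom
  split_ifs
  · rw [div_eq_mul_inv, mul_inv, ← mul_assoc, norm_mul, norm_mul]
    gcongr
    exacts [hA' _, hB' _, hB' _]
  · rw [norm_zero]
    positivity

theorem tendsto_qBinom_two_mul (hq : ‖q‖ < 1) (n : ℤ) :
    Tendsto (fun N : ℕ => qBinom q (2 * N) (n + N)) atTop (𝓝 (qPochInf q q)⁻¹) := by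
  have hL := qPochInf_self_ne_zero hq
  have hP := tendsto_qPoch hq q
  have h₁ := hP.comp (tendsto_atTop_mono (fun N => by simp only [id]; omega) tendsto_id :
    Tendsto (fun N : ℕ => (2 * (N : ℤ)).toNat) atTop atTop)
  have h₂ := hP.comp (tendsto_atTop_mono (fun N => by omega) (tendsto_sub_atTop_nat n.natAbs) :
    Tendsto (fun N : ℕ => (n + N).toNat) atTop atTop)
  have h₃ := hP.comp (tendsto_atTop_mono (fun N => by omega) (tendsto_sub_atTop_nat n.natAbs) :
    Tendsto (fun N : ℕ => (2 * (N : ℤ) - (n + N)).toNat) atTop atTop)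
  rw [show (qPochInf q q)⁻¹ = qPochInf q q / (qPochInf q q * qPochInf q q) by field_simp]
  refine (h₁.div (h₂.mul h₃) (mul_ne_zero hL hL)).congr' ?_
  filter_upwards [eventually_ge_atTop n.natAbs] with N hN
  exact (if_pos (by omega)).symm

open Complex in
theorem summable_norm_jacobi_term (hq : ‖q‖ < 1) (hq0 : q ≠ 0) (hz : z ≠ 0) :
    Summable fun n : ℤ => ‖(-1 : ℂ) ^ n * q ^ (n * (n - 1) / 2) * z ^ n‖ := by
  have hr : 0 < ‖q‖ := norm_pos_iff.2 hq0
  have hs : 0 < ‖z‖ := norm_pos_iff.2 hz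
  set τ : ℂ := ↑(-Real.log ‖q‖ / (2 * Real.pi)) * I
  set w : ℂ := ↑((Real.log ‖q‖ / 2 - Real.log ‖z‖) / (2 * Real.pi)) * I
  have hτ : 0 < τ.im := by
    simp only [τ, mul_I_im, ofReal_re]
    exact div_pos (neg_pos.2 (Real.log_neg hr hq)) (by positivity)
  refine ((summable_jacobiTheta₂_term_iff w τ).2 hτ).norm.congr fun n => ?_
  rw [norm_jacobiTheta₂_term, norm_mul, norm_mul, norm_zpow, norm_zpow, norm_zpow, norm_neg,
    norm_one, one_zpow, one_mul, ← Real.rpow_intCast, ← Real.rpow_intCast,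
    Real.rpow_def_of_pos hr, Real.rpow_def_of_pos hs, ← Real.exp_add,
    Int.cast_mul_sub_one_ediv_two]
  simp only [τ, w, mul_I_im, ofReal_re]
  congr 1
  field_simp
  ring

theorem tsum_jacobi_term_zero (z : ℂ) :
    ∑' n : ℤ, (-1 : ℂ) ^ n * (0 : ℂ) ^ (n * (n - 1) / 2) * z ^ n = 1 - z := by
  rw [tsum_eq_sum (s := {0, 1}) fun n hn => ?_]
  · rw [Finset.sum_pair zero_ne_one]
    norm_num [sub_eq_add_neg]
  · have h2 : 2 ≤ n * (n - 1) := by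
      simp only [Finset.mem_insert, Finset.mem_singleton, not_or] at hn
      rcases le_or_gt n 0 with h | h
      · nlinarith [lt_of_le_of_ne h hn.1]
      · nlinarith [show 2 ≤ n by omega]
    rw [zero_zpow _ (by omega), mul_zero, zero_mul]

theorem qPochInf_zero_right (a : ℂ) : qPochInf a 0 = 1 - a := by
  rw [qPochInf, tprod_eq_mulSingle 0 fun k hk => by simp [hk]]
  simp

/-- Jacobi's triple product identity. -/
theorem jacobi_triple_product (q z : ℂ) (hq : ‖q‖ < 1) (hz : z ≠ 0) :
    ∑' n : ℤ, (-1 : ℂ) ^ n * q ^ (n * (n - 1) / 2) * z ^ n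
      = qPochInf z q * qPochInf (q / z) q * qPochInf q q := by
  rcases eq_or_ne q 0 with rfl | hq0
  · simp [tsum_jacobi_term_zero, qPochInf_zero_right]
  obtain ⟨C, hC⟩ := exists_norm_qBinom_le hq
  have hpartial : Tendsto (fun N : ℕ => qPoch z q N * qPoch (q / z) q N) atTop
      (𝓝 ((qPochInf q q)⁻¹ * ∑' n : ℤ, (-1 : ℂ) ^ n * q ^ (n * (n - 1) / 2) * z ^ n)) := by
    rw [← tsum_mul_left]
    refine (tendsto_tsum_of_dominated_convergence ((summable_norm_jacobi_term hq hq0 hz).mul_left C)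
      (fun n => (tendsto_qBinom_two_mul hq n).mul_const _)
      (.of_forall fun N n => ?_)).congr fun N => (hasSum_qBinom_mul_jacobi_term hq hq0 hz N).tsum_eq
    rw [norm_mul]
    gcongr
    exact hC _ _
  have hlim := tendsto_nhds_unique hpartial ((tendsto_qPoch hq z).mul (tendsto_qPoch hq (q / z)))
  rw [← hlim, mul_comm, ← mul_assoc, mul_inv_cancel₀ (qPochInf_self_ne_zero hq), one_mul]
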